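/- Let σ_z, σ₊, σ₋ be the 2×2 complex matrices σ_z = [[1,0],[0,−1]], σ₊ = [[0,1],[0,0]], σ₋ = [[0,0],[1,0]], and let α, n̄, λ be real numbers. Define the dissipator D[X] := α·n̄·(2·σ₊·X·σ₋ − (σ₋·σ₊·X + X·σ₋·σ₊)) + α·(n̄+1)·(2·σ₋·X·σ₊ − (σ₊·σ₋·X + X·σ₊·σ₋)) for a 2×2 complex matrix X. Then D[exp(λ·σ_z)] = α·( [ n̄·(e^(−2λ) − 1) + (n̄+1)·(e^(2λ) − 1) ]·I₂ + [ n̄·(e^(−2λ) + 1) − (n̄+1)·(e^(2λ) + 1) ]·σ_z ) · exp(λ·σ_z), where exp denotes the matrix exponential and I₂ the 2×2 identity matrix. -/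

import Mathlib

/-- The Pauli z matrix. -/
noncomputable def sigmaZ : Matrix (Fin 2) (Fin 2) ℂ := !![1, 0; 0, -1]

/-- The raising operator σ₊. -/
noncomputable def sigmaPlus : Matrix (Fin 2) (Fin 2) ℂ := !![0, 1; 0, 0]

/-- The lowering operator σ₋. -/
noncomputable def sigmaMinus : Matrix (Fin 2) (Fin 2) ℂ := !![0, 0; 1, 0]

/-- The two-level dissipator
`D[X] = α n̄ (2σ₊Xσ₋ − {σ₋σ₊, X}) + α(n̄+1)(2σ₋Xσ₊ − {σ₊σ₋, X})`. -/
noncomputable def dissipator (α nbar : ℝ) (X : Matrix (Fin 2) (Fin 2) ℂ) :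
    Matrix (Fin 2) (Fin 2) ℂ :=
  ((α : ℂ) * nbar) •
      ((2 : ℂ) • (sigmaPlus * X * sigmaMinus)
        - (sigmaMinus * sigmaPlus * X + X * sigmaMinus * sigmaPlus))
    + ((α : ℂ) * (nbar + 1)) •
      ((2 : ℂ) • (sigmaMinus * X * sigmaPlus)
        - (sigmaPlus * sigmaMinus * X + X * sigmaPlus * sigmaMinus))

/-! `exp(λσ_z) = diag(e^λ, e^{-λ})` is diagonal. On a diagonal matrix `diag(a, b)` the jump terms
`σ₊Xσ₋ = diag(b, 0)` and `σ₋Xσ₊ = diag(0, a)` swap the populations, while the anticommutators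
with the projectors `σ₋σ₊ = diag(0, 1)`, `σ₊σ₋ = diag(1, 0)` remove them, so
`D[diag(a, b)] = 2α(n̄b − (n̄+1)a) σ_z`. The right-hand side is diagonal as well, and
`e^{∓2λ} e^{±λ} = e^{∓λ}` brings it to the same form. -/

open Matrix

lemma sigmaZ_eq_diagonal : sigmaZ = diagonal ![1, -1] := by
  ext i j; fin_cases i <;> fin_cases j <;> rfl

lemma sigmaPlus_mul_sigmaMinus : sigmaPlus * sigmaMinus = diagonal ![1, 0] := by
  ext i j; fin_cases i <;> fin_cases j <;> simp [sigmaPlus, sigmaMinus]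

lemma sigmaMinus_mul_sigmaPlus : sigmaMinus * sigmaPlus = diagonal ![0, 1] := by
  ext i j; fin_cases i <;> fin_cases j <;> simp [sigmaPlus, sigmaMinus]

lemma sigmaPlus_mul_diagonal_mul_sigmaMinus (a b : ℂ) :
    sigmaPlus * diagonal ![a, b] * sigmaMinus = diagonal ![b, 0] := by
  ext i j; fin_cases i <;> fin_cases j <;>
    simp [sigmaPlus, sigmaMinus, mul_apply, vecMul_diagonal]

lemma sigmaMinus_mul_diagonal_mul_sigmaPlus (a b : ℂ) :
    sigmaMinus * diagonal ![a, b] * sigmaPlus = diagonal ![0, a] := by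
  ext i j; fin_cases i <;> fin_cases j <;>
    simp [sigmaPlus, sigmaMinus, mul_apply, vecMul_diagonal]

lemma smul_one_add_smul_sigmaZ (c d : ℂ) :
    c • (1 : Matrix (Fin 2) (Fin 2) ℂ) + d • sigmaZ = diagonal ![c + d, c - d] := by
  ext i j; fin_cases i <;> fin_cases j <;> simp [sigmaZ, sub_eq_add_neg]

lemma exp_smul_sigmaZ (l : ℝ) :
    NormedSpace.exp (l • sigmaZ) = diagonal ![Complex.exp l, Complex.exp (-l)] := by
  rw [sigmaZ_eq_diagonal, ← diagonal_smul, exp_diagonal]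
  congr 1
  ext i; fin_cases i <;> simp [← Complex.exp_eq_exp_ℂ]

lemma dissipator_diagonal (α nbar : ℝ) (a b : ℂ) :
    dissipator α nbar (diagonal ![a, b])
      = (2 * α * (nbar * b - (nbar + 1) * a) : ℂ) • sigmaZ := by
  rw [dissipator, sigmaPlus_mul_diagonal_mul_sigmaMinus, sigmaMinus_mul_diagonal_mul_sigmaPlus,
    sigmaPlus_mul_sigmaMinus, sigmaMinus_mul_sigmaPlus, mul_assoc (diagonal _),
    mul_assoc (diagonal _), sigmaPlus_mul_sigmaMinus, sigmaMinus_mul_sigmaPlus]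
  simp only [diagonal_mul_diagonal, sigmaZ_eq_diagonal]
  ext i j; fin_cases i <;> fin_cases j <;> simp <;> ring

/-- Action of the dissipator on `exp(λσ_z)`:
`D[exp(λσ_z)] = α([n̄(e^(−2λ)−1) + (n̄+1)(e^(2λ)−1)] I₂
  + [n̄(e^(−2λ)+1) − (n̄+1)(e^(2λ)+1)] σ_z) exp(λσ_z)`. -/
theorem dissipator_exp_sigmaZ (α nbar l : ℝ) :
    dissipator α nbar (NormedSpace.exp (l • sigmaZ))
      = (α : ℂ) •
          (((nbar : ℂ) * (Real.exp (-(2 * l)) - 1)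
              + ((nbar : ℂ) + 1) * (Real.exp (2 * l) - 1)) • (1 : Matrix (Fin 2) (Fin 2) ℂ)
            + ((nbar : ℂ) * (Real.exp (-(2 * l)) + 1)
              - ((nbar : ℂ) + 1) * (Real.exp (2 * l) + 1)) • sigmaZ)
          * NormedSpace.exp (l • sigmaZ) := by
  have exp_two_mul : ((Real.exp (2 * l) : ℝ) : ℂ) = Complex.exp l ^ 2 := by
    rw [Complex.ofReal_exp, ← Complex.exp_nat_mul]; push_cast; ring_nf
  have exp_neg_two_mul : ((Real.exp (-(2 * l)) : ℝ) : ℂ) = (Complex.exp l)⁻¹ ^ 2 := by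
    rw [Real.exp_neg, Complex.ofReal_inv, exp_two_mul, inv_pow]
  rw [exp_smul_sigmaZ, dissipator_diagonal, smul_one_add_smul_sigmaZ, smul_mul_assoc,
    diagonal_mul_diagonal, sigmaZ_eq_diagonal, ← diagonal_smul, ← diagonal_smul]
  congr 1
  ext i; fin_cases i <;>
    simp [exp_two_mul, exp_neg_two_mul, Complex.exp_neg] <;> field_simp <;> ring
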